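/- Let X be a simplicial set, ι an index set, and for each j ∈ ι let xⱼ be a non-degenerate nⱼ-simplex of X and ρⱼ : [nⱼ] ⟶ [mⱼ] an enforcer of xⱼ. Let Y be the pushout in SSet of the map ⨿ⱼ Δ[nⱼ] ⟶ ⨿ⱼ Δ[mⱼ] induced by the ρⱼ along the map ⨿ⱼ Δ[nⱼ] ⟶ X induced by the representing maps of the xⱼ, and let q : X ⟶ Y be the resulting coprojection. Then for every non-singular simplicial set A and every simplicial map k : X ⟶ A there is a unique map k̄ : Y ⟶ A with k = k̄ ∘ q. -/

import Mathlib

open CategoryTheory CategoryTheory.Limits Simplicial SSet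

/-- The `i`-th vertex of an `n`-simplex `x`, i.e. `x · εᵢ`, where `εᵢ : [0] ⟶ [n]`
sends `0` to `i`. -/
def SSet.vertex (X : SSet) {n : ℕ} (x : X _⦋n⦌) (i : Fin (n + 1)) : X _⦋0⦌ :=
  X.map (SimplexCategory.const ⦋0⦌ ⦋n⦌ i).op x

/-- A simplex is degenerate if it is obtained from a simplex of strictly lower degree
by the action of a (necessarily non-identity) epimorphism of the simplex category. -/
def SSet.IsDegenerate (X : SSet) {n : ℕ} (x : X _⦋n⦌) : Prop :=
  ∃ (m : ℕ) (_ : m < n) (σ : (⦋n⦌ : SimplexCategory) ⟶ ⦋m⦌) (y : X _⦋m⦌),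
    Epi σ ∧ x = X.map σ.op y

/-- A simplicial set is non-singular if the representing map of each of its
non-degenerate simplices is a monomorphism. -/
def SSet.NonSingular (X : SSet) : Prop :=
  ∀ (n : ℕ) (x : X _⦋n⦌), ¬ X.IsDegenerate x → Mono ((SSet.yonedaEquiv (X := X) (n := ⦋n⦌)).symm x)

/-- The relation `≈ₓ` on `Fin (n + 1)`: `i ≈ₓ k` iff there exists `j` with
`i ≤ k`, `k ≤ j` and `x·εᵢ = x·εⱼ`. -/
def SSet.approxRel (X : SSet) {n : ℕ} (x : X _⦋n⦌) (i k : Fin (n + 1)) : Prop :=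
  ∃ j, i ≤ k ∧ k ≤ j ∧ X.vertex x i = X.vertex x j

/-- The equivalence relation `Rₓ` generated by `≈ₓ`. -/
def SSet.vertexRel (X : SSet) {n : ℕ} (x : X _⦋n⦌) : Fin (n + 1) → Fin (n + 1) → Prop :=
  Relation.EqvGen (X.approxRel x)

/-!
Vertices of a non-degenerate simplex of a non-singular simplicial set `A` are pairwise distinct.
Write `k xⱼ = σ^* z` with `z` non-degenerate (Eilenberg–Zilber). Since `σ` is monotone and
`z` has distinct vertices, `σ` identifies any `i ≈ₓ i'`, hence any `i Rₓ i'`; so `σ` factors through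
the enforcer `ρⱼ`, and `z` yields the extension of `k` over `Δ[mⱼ]`. The extension over the
pushout is unique because `⨿ Δ[nⱼ] ⟶ ⨿ Δ[mⱼ]` is a coproduct of split epimorphisms.
-/

namespace SimplexCategory

theorem exists_comp_eq_of_epi {n m q : SimplexCategory} (ρ : n ⟶ m) [Epi ρ] (σ : n ⟶ q)
    (h : ∀ i i', ρ.toOrderHom i = ρ.toOrderHom i' → σ.toOrderHom i = σ.toOrderHom i') :
    ∃ τ : m ⟶ q, ρ ≫ τ = σ := by
  have := isSplitEpi_of_epi ρ
  refine ⟨section_ ρ ≫ σ, Hom.ext _ _ (OrderHom.ext _ _ (funext fun i => h _ _ ?_))⟩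
  exact congr_arg (fun f : m ⟶ m => f.toOrderHom (ρ.toOrderHom i)) (IsSplitEpi.id ρ)

end SimplexCategory

namespace SSet

theorem isDegenerate_iff_mem_degenerate (X : SSet) {n : ℕ} (x : X _⦋n⦌) :
    X.IsDegenerate x ↔ x ∈ X.degenerate n := by
  simp only [mem_degenerate_iff, IsDegenerate, Set.mem_range]
  constructor
  · rintro ⟨m, hm, σ, y, hσ, rfl⟩
    exact ⟨m, hm, σ, hσ, y, rfl⟩
  · rintro ⟨m, hm, σ, hσ, y, rfl⟩
    exact ⟨m, hm, σ, y, hσ, rfl⟩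

theorem NonSingular.nonsingular {X : SSet} (hX : X.NonSingular) : X.Nonsingular where
  mono x := hX _ x.1 ((isDegenerate_iff_mem_degenerate X x.1).not.mpr x.2)

theorem vertex_map (X : SSet) {p q : ℕ} (σ : (⦋p⦌ : SimplexCategory) ⟶ ⦋q⦌) (z : X _⦋q⦌)
    (i : Fin (p + 1)) : X.vertex (X.map σ.op z) i = X.vertex z (σ.toOrderHom i) := by
  simp only [vertex, ← Functor.map_comp_apply, ← op_comp, SimplexCategory.const_comp]

theorem vertex_app {X Y : SSet} (k : X ⟶ Y) {p : ℕ} (x : X _⦋p⦌) (i : Fin (p + 1)) :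
    Y.vertex (k.app _ x) i = k.app _ (X.vertex x i) :=
  (NatTrans.naturality_apply k _ x).symm

theorem Nonsingular.vertex_injective {X : SSet} [X.Nonsingular] {p : ℕ} {z : X _⦋p⦌}
    (hz : z ∈ X.nonDegenerate p) : Function.Injective (X.vertex z) := fun i i' h => by
  simpa using congr_arg (fun f : ⦋0⦌ ⟶ ⦋p⦌ => f.toOrderHom 0) (Nonsingular.injective_map z hz h)

theorem approxRel.map {X Y : SSet} (k : X ⟶ Y) {p : ℕ} {x : X _⦋p⦌} {i i' : Fin (p + 1)}
    (h : X.approxRel x i i') : Y.approxRel (k.app _ x) i i' := by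
  obtain ⟨j, hii', hi'j, hij⟩ := h
  exact ⟨j, hii', hi'j, by rw [vertex_app, vertex_app, hij]⟩

theorem Nonsingular.approxRel_map {X : SSet} [X.Nonsingular] {p q : ℕ} {z : X _⦋q⦌}
    (hz : z ∈ X.nonDegenerate q) (σ : (⦋p⦌ : SimplexCategory) ⟶ ⦋q⦌) {i i' : Fin (p + 1)}
    (h : X.approxRel (X.map σ.op z) i i') : σ.toOrderHom i = σ.toOrderHom i' := by
  obtain ⟨j, hii', hi'j, hij⟩ := h
  rw [vertex_map, vertex_map] at hij
  have hσij := vertex_injective hz hij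
  exact le_antisymm (σ.toOrderHom.monotone hii') (hσij ▸ σ.toOrderHom.monotone hi'j)

theorem vertexRel.map_eq {X Y : SSet} [Y.Nonsingular] (k : X ⟶ Y) {p q : ℕ} {x : X _⦋p⦌}
    {z : Y _⦋q⦌} (hz : z ∈ Y.nonDegenerate q) {σ : (⦋p⦌ : SimplexCategory) ⟶ ⦋q⦌}
    (hkx : k.app _ x = Y.map σ.op z) {i i' : Fin (p + 1)} (h : X.vertexRel x i i') :
    σ.toOrderHom i = σ.toOrderHom i' :=
  (Setoid.ker σ.toOrderHom).iseqv.eqvGen_iff.mp <| Relation.EqvGen.mono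
    (fun _ _ hab => Nonsingular.approxRel_map hz σ (hkx ▸ hab.map k)) _ _ h

theorem Nonsingular.exists_stdSimplex_map_comp_eq {X Y : SSet} [Y.Nonsingular] (k : X ⟶ Y)
    {n m : ℕ} (x : X _⦋n⦌) (ρ : (⦋n⦌ : SimplexCategory) ⟶ ⦋m⦌) [Epi ρ]
    (hρ : ∀ i i', ρ.toOrderHom i = ρ.toOrderHom i' → X.vertexRel x i i') :
    ∃ h : Δ[m] ⟶ Y, SSet.stdSimplex.map ρ ≫ h = yonedaEquiv.symm x ≫ k := by
  obtain ⟨q, σ, _, ⟨z, hz⟩, hkx⟩ := Y.exists_nonDegenerate (k.app _ x)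
  obtain ⟨τ, rfl⟩ := SimplexCategory.exists_comp_eq_of_epi ρ σ
    fun i i' h => vertexRel.map_eq k hz hkx (hρ i i' h)
  refine ⟨SSet.stdSimplex.map τ ≫ yonedaEquiv.symm z, ?_⟩
  rw [← Category.assoc, ← SSet.stdSimplex.map_comp, yonedaEquiv_symm_naturality_left, ← hkx,
    yonedaEquiv_symm_comp]

end SSet

theorem CategoryTheory.Limits.pushout.existsUnique_eq_inr_comp_of_epi {C : Type*} [Category C]
    {P Q R W : C} (f : P ⟶ Q) (g : P ⟶ R) [HasPushout f g] [Epi f] (h : Q ⟶ W) (k : R ⟶ W)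
    (w : f ≫ h = g ≫ k) : ∃! l : pushout f g ⟶ W, k = pushout.inr f g ≫ l := by
  refine ⟨pushout.desc h k w, (pushout.inr_desc _ _ _).symm, fun l hl => pushout.hom_ext ?_ ?_⟩
  · rw [← cancel_epi f, pushout.condition_assoc, ← hl, pushout.inl_desc, w]
  · rw [pushout.inr_desc, hl]

theorem pushout_enforcers_universal_general {ι : Type} (X : SSet.{0}) (n m : ι → ℕ)
    (x : ∀ j, X _⦋n j⦌)
    (ρ : ∀ j, (⦋n j⦌ : SimplexCategory) ⟶ ⦋m j⦌) (hρ : ∀ j, Epi (ρ j))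
    (henf : ∀ j (i i' : Fin (n j + 1)),
      (ρ j).toOrderHom i = (ρ j).toOrderHom i' ↔ X.vertexRel (x j) i i')
    (A : SSet.{0}) (hA : A.NonSingular) (k : X ⟶ A) :
    letI Φ : (∐ fun j => Δ[n j]) ⟶ (∐ fun j => Δ[m j]) :=
      Limits.Sigma.map fun j => SSet.stdSimplex.map (ρ j)
    letI g : (∐ fun j => Δ[n j]) ⟶ X :=
      Limits.Sigma.desc fun j => (SSet.yonedaEquiv (X := X) (n := ⦋n j⦌)).symm (x j)
    ∃! kbar : pushout Φ g ⟶ A, k = pushout.inr Φ g ≫ kbar := by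
  have := hA.nonsingular
  have (j : ι) : Epi (SSet.stdSimplex.map (ρ j)) :=
    ((isSplitEpi_of_epi (ρ j)).exists_splitEpi.some.map SSet.stdSimplex).epi
  choose h hh using fun j =>
    Nonsingular.exists_stdSimplex_map_comp_eq k (x j) (ρ j) fun i i' => (henf j i i').mp
  refine pushout.existsUnique_eq_inr_comp_of_epi _ _ (Sigma.desc h) k (Sigma.hom_ext _ _ ?_)
  intro j
  simpa using hh j

/-- Pushing out along a family of enforcers of non-degenerate simplices yields a
quotient `q : X ⟶ Y` through which every map from `X` to a non-singular simplicial
set factors uniquely. -/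
theorem pushout_enforcers_universal {ι : Type} (X : SSet.{0}) (n m : ι → ℕ)
    (x : ∀ j, X _⦋n j⦌) (hx : ∀ j, ¬ X.IsDegenerate (x j))
    (ρ : ∀ j, (⦋n j⦌ : SimplexCategory) ⟶ ⦋m j⦌) (hρ : ∀ j, Epi (ρ j))
    (henf : ∀ j (i i' : Fin (n j + 1)),
      (ρ j).toOrderHom i = (ρ j).toOrderHom i' ↔ X.vertexRel (x j) i i')
    (A : SSet.{0}) (hA : A.NonSingular) (k : X ⟶ A) :
    letI Φ : (∐ fun j => Δ[n j]) ⟶ (∐ fun j => Δ[m j]) :=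
      Limits.Sigma.map fun j => SSet.stdSimplex.map (ρ j)
    letI g : (∐ fun j => Δ[n j]) ⟶ X :=
      Limits.Sigma.desc fun j => (SSet.yonedaEquiv (X := X) (n := ⦋n j⦌)).symm (x j)
    ∃! kbar : pushout Φ g ⟶ A, k = pushout.inr Φ g ≫ kbar :=
  pushout_enforcers_universal_general X n m x ρ hρ henf A hA k
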